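/- arXiv:1202.2112 — 3 statements merged into one kernel-verified Lean document; each statement's English description precedes it below -/
import Mathlib

section
/- Let f be a monotone submodular function on sequences over V with f(⟨⟩) = 0, and let N ≥ 1. Suppose a sequence Ŝ = ⟨ŝ₁,…,ŝ_N⟩ is built greedily with additive errors ε₁,…,ε_N ≥ 0, i.e., for each i, f(Ŝ_{i-1} ⊕ ⟨ŝ_i⟩) − f(Ŝ_{i-1}) ≥ max_{s ∈ V} [f(Ŝ_{i-1} ⊕ ⟨s⟩) − f(Ŝ_{i-1})] − ε_i, where Ŝ_{i-1} = ⟨ŝ₁,…,ŝ_{i-1}⟩. Then for any sequence S* of length at most N, f(Ŝ) ≥ (1 − 1/e) f(S*) − Σ_{i=1}^N ε_i. -/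
/-!
Let `Ŝ_k` be the greedy prefix of length `k` and `g_k = f(S*) - f(Ŝ_k)` the remaining gap.
Monotonicity gives `f(S*) ≤ f(Ŝ_k ⊕ S*)`, and submodularity bounds the gain of appending `S*`
by the sum of the single-element gains over `Ŝ_k`; each of these is at most the greedy gain plus
`ε_{k+1}`. As `|S*| ≤ N`, this yields `g_{k+1} ≤ (1 - 1/N) g_k + ε_{k+1}`, and unrolling the
recurrence together with `(1 - 1/N)^N ≤ 1/e` gives the bound.
-/

open Finset

section Sequence

variable {V : Type*} (f : List V → ℝ)

theorem sub_le_sum_marginal_gains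
    (hsub : ∀ (S₁ S₂ : List V) (a : V),
      f (S₁ ++ S₂ ++ [a]) - f (S₁ ++ S₂) ≤ f (S₁ ++ [a]) - f S₁)
    (P L : List V) :
    f (P ++ L) - f P ≤ (L.map fun a => f (P ++ [a]) - f P).sum := by
  induction L using List.reverseRecOn with
  | nil => simp
  | append_singleton L a ih =>
    have := hsub P L a
    simp only [← List.append_assoc, List.map_append, List.map_singleton, List.sum_append,
      List.sum_singleton]
    linarith

theorem le_add_length_mul_of_marginal_gain_le
    (hsub : ∀ (S₁ S₂ : List V) (a : V),
      f (S₁ ++ S₂ ++ [a]) - f (S₁ ++ S₂) ≤ f (S₁ ++ [a]) - f S₁)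
    {P S : List V} (hS : f S ≤ f (P ++ S)) {δ : ℝ} (hδ : ∀ a, f (P ++ [a]) - f P ≤ δ) :
    f S ≤ f P + S.length * δ := by
  have hsum : (S.map fun a => f (P ++ [a]) - f P).sum ≤ S.length * δ := by
    simpa using List.sum_le_card_nsmul (S.map fun a => f (P ++ [a]) - f P) δ fun _ hx => by
      obtain ⟨a, -, rfl⟩ := List.mem_map.mp hx
      exact hδ a
  linarith [sub_le_sum_marginal_gains f hsub P S]

theorem approxGreedy_gap_contracts
    (hmono : ∀ S₁ S₂ : List V, f S₁ ≤ f (S₁ ++ S₂) ∧ f S₂ ≤ f (S₁ ++ S₂))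
    (hsub : ∀ (S₁ S₂ : List V) (a : V),
      f (S₁ ++ S₂ ++ [a]) - f (S₁ ++ S₂) ≤ f (S₁ ++ [a]) - f S₁)
    {P : List V} {x : V} {δ : ℝ} (hδ : 0 ≤ δ)
    (hgreedy : ∀ s, f (P ++ [s]) - f P - δ ≤ f (P ++ [x]) - f P)
    {S : List V} {n : ℕ} (hn : 0 < n) (hS : S.length ≤ n) :
    f S - f (P ++ [x]) ≤ (1 - 1 / n) * (f S - f P) + δ := by
  set gain := f (P ++ [x]) - f P
  have hgain : 0 ≤ gain := sub_nonneg.mpr (hmono P [x]).1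
  have hlen : (S.length : ℝ) * (gain + δ) ≤ n * (gain + δ) := by gcongr
  have hfS : f S - f P ≤ n * (gain + δ) := by
    linarith [le_add_length_mul_of_marginal_gain_le f hsub (hmono P S).2
      (δ := gain + δ) fun a => by linarith [hgreedy a]]
  have hn' : (0 : ℝ) < n := by exact_mod_cast hn
  have : (f S - f P) / n ≤ gain + δ := by rwa [div_le_iff₀ hn', mul_comm]
  have : (1 - 1 / (n : ℝ)) * (f S - f P) = f S - f P - (f S - f P) / n := by ring
  linarith

end Sequence

theorem le_pow_mul_add_sum_of_le_mul_add {c : ℝ} (hc₀ : 0 ≤ c) (hc₁ : c ≤ 1) (g : ℕ → ℝ) :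
    ∀ {n : ℕ} (e : Fin n → ℝ), (∀ i, 0 ≤ e i) →
      (∀ i : Fin n, g (i + 1) ≤ c * g i + e i) → g n ≤ c ^ n * g 0 + ∑ i, e i
  | 0, _, _, _ => by simp
  | n + 1, e, he, hg => by
    have ih := le_pow_mul_add_sum_of_le_mul_add hc₀ hc₁ g (e ∘ Fin.castSucc)
      (fun i => he _) fun i => hg i.castSucc
    have hsum : 0 ≤ ∑ i : Fin n, e i.castSucc := sum_nonneg fun i _ => he _
    simp only [Function.comp_apply] at ih
    calc g (n + 1) ≤ c * g n + e (Fin.last n) := hg (Fin.last n)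
      _ ≤ c * (c ^ n * g 0 + ∑ i : Fin n, e i.castSucc) + e (Fin.last n) := by gcongr
      _ ≤ c ^ (n + 1) * g 0 + ∑ i : Fin n, e i.castSucc + e (Fin.last n) := by
        rw [mul_add, ← mul_assoc, ← pow_succ']
        gcongr
        exact mul_le_of_le_one_left hsum hc₁
      _ = c ^ (n + 1) * g 0 + ∑ i, e i := by rw [Fin.sum_univ_castSucc, add_assoc]

theorem List.take_ofFn_succ {α : Type*} {n : ℕ} (v : Fin n → α) (i : Fin n) :
    (List.ofFn v).take (i + 1) = (List.ofFn v).take i ++ [v i] := by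
  rw [List.take_succ_eq_append_getElem (by simp)]
  simp

theorem stmt5_general {V : Type*} (f : List V → ℝ)
    (hnonneg : ∀ S, 0 ≤ f S)
    (hmono : ∀ S₁ S₂ : List V, f S₁ ≤ f (S₁ ++ S₂) ∧ f S₂ ≤ f (S₁ ++ S₂))
    (hsub : ∀ (S₁ S₂ : List V) (a : V),
      f (S₁ ++ S₂ ++ [a]) - f (S₁ ++ S₂) ≤ f (S₁ ++ [a]) - f S₁)
    (hempty : f [] = 0)
    (N : ℕ) (hN : 1 ≤ N) (gs : Fin N → V) (ε : Fin N → ℝ) (hε : ∀ i, 0 ≤ ε i)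
    (hgreedy : ∀ (i : Fin N) (s : V),
      f ((List.ofFn gs).take i ++ [s]) - f ((List.ofFn gs).take i) - ε i ≤
        f ((List.ofFn gs).take i ++ [gs i]) - f ((List.ofFn gs).take i))
    (S' : List V) (hS' : S'.length ≤ N) :
    f (List.ofFn gs) ≥ (1 - 1 / Real.exp 1) * f S' - ∑ i, ε i := by
  have hN' : (1 : ℝ) ≤ N := by exact_mod_cast hN
  have hc₀ : 0 ≤ 1 - 1 / (N : ℝ) := sub_nonneg.mpr ((div_le_one (by positivity)).mpr hN')
  have hc₁ : 1 - 1 / (N : ℝ) ≤ 1 := sub_le_self _ (by positivity)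
  have hgap := le_pow_mul_add_sum_of_le_mul_add hc₀ hc₁
    (fun k => f S' - f ((List.ofFn gs).take k)) ε hε fun i => by
      simpa only [List.take_ofFn_succ] using
        approxGreedy_gap_contracts f hmono hsub (hε i) (hgreedy i) hN hS'
  have hpow : (1 - 1 / (N : ℝ)) ^ N ≤ 1 / Real.exp 1 := by
    simpa [Real.exp_neg] using Real.one_sub_div_pow_le_exp_neg (t := 1) hN'
  rw [List.take_zero, hempty, sub_zero,
    List.take_of_length_le (List.length_ofFn (f := gs)).le] at hgap
  linarith [mul_le_mul_of_nonneg_right hpow (hnonneg S')]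

/-- approximate greedy guarantee (Streeter–Golovin).  If `Ŝ` of length `N`
is built greedily with additive errors `ε i ≥ 0`, then for any benchmark sequence `S*`
of length at most `N`, `f(Ŝ) ≥ (1 − 1/e) f(S*) − Σ ε i`. -/
theorem stmt5 {V : Type*} [Fintype V] [Nonempty V] (f : List V → ℝ)
    (hnonneg : ∀ S, 0 ≤ f S)
    (hmono : ∀ S₁ S₂ : List V, f S₁ ≤ f (S₁ ++ S₂) ∧ f S₂ ≤ f (S₁ ++ S₂))
    (hsub : ∀ (S₁ S₂ : List V) (a : V),
      f (S₁ ++ S₂ ++ [a]) - f (S₁ ++ S₂) ≤ f (S₁ ++ [a]) - f S₁)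
    (hempty : f [] = 0)
    (N : ℕ) (hN : 1 ≤ N) (gs : Fin N → V) (ε : Fin N → ℝ) (hε : ∀ i, 0 ≤ ε i)
    (hgreedy : ∀ (i : Fin N) (s : V),
      f ((List.ofFn gs).take i ++ [s]) - f ((List.ofFn gs).take i) - ε i ≤
        f ((List.ofFn gs).take i ++ [gs i]) - f ((List.ofFn gs).take i))
    (S' : List V) (hS' : S'.length ≤ N) :
    f (List.ofFn gs) ≥ (1 - 1 / Real.exp 1) * f S' - ∑ i, ε i :=
  stmt5_general f hnonneg hmono hsub hempty N hN gs ε hε hgreedy S' hS'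
end

section
/- Let f be a monotone submodular function on sequences over V with f(⟨⟩) = 0, and let Ŝ = ⟨ŝ₁,…,ŝ_N⟩ be the exact greedy sequence (ε_i = 0 for all i). Then for any sequence S* of length at most N, f(Ŝ) ≥ (1 − 1/e) f(S*). -/
/-!
Submodularity bounds the gain of appending `S*` to a greedy prefix `Ŝᵢ` by the sum of the
gains of its single elements, each of which is at most the greedy gain. With monotonicity this
gives `f S* - f Ŝᵢ ≤ N (f Ŝᵢ₊₁ - f Ŝᵢ)`, so the gap `f S* - f Ŝᵢ` shrinks by a factor
`1 - 1/N` at every step, and `(1 - 1/N)ᴺ ≤ 1/e`.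
-/

section Submodular

variable {V : Type*} (f : List V → ℝ)

theorem sub_le_sum_map_marginal
    (hsub : ∀ (S₁ S₂ : List V) (a : V),
      f (S₁ ++ S₂ ++ [a]) - f (S₁ ++ S₂) ≤ f (S₁ ++ [a]) - f S₁)
    (S T : List V) :
    f (T ++ S) - f T ≤ (S.map fun a => f (T ++ [a]) - f T).sum := by
  induction S generalizing T with
  | nil => simp
  | cons a S ih =>
    have hrest := ih (T ++ [a])
    have hdiminish : (S.map fun b => f (T ++ [a] ++ [b]) - f (T ++ [a])).sum ≤
        (S.map fun b => f (T ++ [b]) - f T).sum :=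
      List.sum_le_sum fun b _ => hsub T [a] b
    rw [show T ++ a :: S = T ++ [a] ++ S by simp]
    simp only [List.map_cons, List.sum_cons]
    linarith

theorem sub_le_mul_marginal_of_forall_marginal_le
    (hmono : ∀ S₁ S₂ : List V, f S₁ ≤ f (S₁ ++ S₂) ∧ f S₂ ≤ f (S₁ ++ S₂))
    (hsub : ∀ (S₁ S₂ : List V) (a : V),
      f (S₁ ++ S₂ ++ [a]) - f (S₁ ++ S₂) ≤ f (S₁ ++ [a]) - f S₁)
    {T S : List V} {g : V} {N : ℕ}
    (hg : ∀ s, f (T ++ [s]) - f T ≤ f (T ++ [g]) - f T) (hS : S.length ≤ N) :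
    f S - f T ≤ N * (f (T ++ [g]) - f T) := by
  have hgain : 0 ≤ f (T ++ [g]) - f T := sub_nonneg.mpr (hmono T [g]).1
  have hsum : (S.map fun a => f (T ++ [a]) - f T).sum ≤ N * (f (T ++ [g]) - f T) :=
    calc (S.map fun a => f (T ++ [a]) - f T).sum
        ≤ (S.map fun a => f (T ++ [a]) - f T).length • (f (T ++ [g]) - f T) :=
          List.sum_le_card_nsmul _ _ (by simpa using fun s _ => hg s)
      _ = S.length * (f (T ++ [g]) - f T) := by simp
      _ ≤ N * (f (T ++ [g]) - f T) := by gcongr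
  linarith [(hmono T S).2, sub_le_sum_map_marginal f hsub S T]

theorem sub_append_singleton_le_one_sub_inv_mul
    (hmono : ∀ S₁ S₂ : List V, f S₁ ≤ f (S₁ ++ S₂) ∧ f S₂ ≤ f (S₁ ++ S₂))
    (hsub : ∀ (S₁ S₂ : List V) (a : V),
      f (S₁ ++ S₂ ++ [a]) - f (S₁ ++ S₂) ≤ f (S₁ ++ [a]) - f S₁)
    {T S : List V} {g : V} {N : ℕ} (hN : 0 < N)
    (hg : ∀ s, f (T ++ [s]) - f T ≤ f (T ++ [g]) - f T) (hS : S.length ≤ N) :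
    f S - f (T ++ [g]) ≤ (1 - 1 / N) * (f S - f T) := by
  have hNpos : (0 : ℝ) < N := by exact_mod_cast hN
  have h := sub_le_mul_marginal_of_forall_marginal_le f hmono hsub hg hS
  have hdiv : (f S - f T) / N ≤ f (T ++ [g]) - f T := by
    rwa [div_le_iff₀' hNpos]
  calc f S - f (T ++ [g]) = (f S - f T) - (f (T ++ [g]) - f T) := by ring
    _ ≤ (f S - f T) - (f S - f T) / N := by linarith
    _ = (1 - 1 / N) * (f S - f T) := by ring

end Submodular

theorem List.take_ofFn_append_singleton {α : Type*} {N : ℕ} (gs : Fin N → α) (i : Fin N) :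
    (List.ofFn gs).take i ++ [gs i] = (List.ofFn gs).take (i + 1) := by
  simpa using List.take_concat_get' (List.ofFn gs) i (by simp)

theorem stmt6_general {V : Type*} (f : List V → ℝ)
    (hmono : ∀ S₁ S₂ : List V, f S₁ ≤ f (S₁ ++ S₂) ∧ f S₂ ≤ f (S₁ ++ S₂))
    (hsub : ∀ (S₁ S₂ : List V) (a : V),
      f (S₁ ++ S₂ ++ [a]) - f (S₁ ++ S₂) ≤ f (S₁ ++ [a]) - f S₁)
    (hempty : f [] = 0)
    (N : ℕ) (hN : 1 ≤ N) (gs : Fin N → V)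
    (hgreedy : ∀ (i : Fin N) (s : V),
      f ((List.ofFn gs).take i ++ [s]) - f ((List.ofFn gs).take i) ≤
        f ((List.ofFn gs).take i ++ [gs i]) - f ((List.ofFn gs).take i))
    (S' : List V) (hS' : S'.length ≤ N) :
    f (List.ofFn gs) ≥ (1 - 1 / Real.exp 1) * f S' := by
  have hratio : 0 ≤ 1 - 1 / (N : ℝ) := by
    rw [sub_nonneg, div_le_one (by positivity)]
    exact_mod_cast hN
  have hgap : f S' - f ((List.ofFn gs).take N) ≤
      (1 - 1 / (N : ℝ)) ^ N * (f S' - f ((List.ofFn gs).take 0)) := by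
    refine le_geom (u := fun i => f S' - f ((List.ofFn gs).take i)) hratio N fun k hk => ?_
    have hstep := sub_append_singleton_le_one_sub_inv_mul f hmono hsub hN (hgreedy ⟨k, hk⟩) hS'
    rwa [List.take_ofFn_append_singleton] at hstep
  have hexp : (1 - 1 / (N : ℝ)) ^ N ≤ 1 / Real.exp 1 := by
    simpa [Real.exp_neg] using Real.one_sub_div_pow_le_exp_neg (t := 1) (by exact_mod_cast hN)
  have hS'nonneg : 0 ≤ f S' := by simpa [hempty] using (hmono [] S').1
  simp only [List.take_of_length_le (by simp : (List.ofFn gs).length ≤ N), List.take_zero,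
    hempty, sub_zero] at hgap
  linarith [mul_le_mul_of_nonneg_right hexp hS'nonneg]

/-- exact greedy guarantee.  If `Ŝ` of length `N` is the exact greedy
sequence, then for any benchmark sequence `S*` of length at most `N`,
`f(Ŝ) ≥ (1 − 1/e) f(S*)`. -/
theorem stmt6 {V : Type*} [Fintype V] [Nonempty V] (f : List V → ℝ)
    (hnonneg : ∀ S, 0 ≤ f S)
    (hmono : ∀ S₁ S₂ : List V, f S₁ ≤ f (S₁ ++ S₂) ∧ f S₂ ≤ f (S₁ ++ S₂))
    (hsub : ∀ (S₁ S₂ : List V) (a : V),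
      f (S₁ ++ S₂ ++ [a]) - f (S₁ ++ S₂) ≤ f (S₁ ++ [a]) - f S₁)
    (hempty : f [] = 0)
    (N : ℕ) (hN : 1 ≤ N) (gs : Fin N → V)
    (hgreedy : ∀ (i : Fin N) (s : V),
      f ((List.ofFn gs).take i ++ [s]) - f ((List.ofFn gs).take i) ≤
        f ((List.ofFn gs).take i ++ [gs i]) - f ((List.ofFn gs).take i))
    (S' : List V) (hS' : S'.length ≤ N) :
    f (List.ofFn gs) ≥ (1 - 1 / Real.exp 1) * f S' :=
  stmt6_general f hmono hsub hempty N hN gs hgreedy S' hS'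
end

section
/- Let f be monotone submodular on sequences over V with f(⟨⟩) = 0, N ≥ 1, and let Δ_i = max_{s ∈ V} [f(Ŝ_{i-1} ⊕ ⟨s⟩) − f(Ŝ_{i-1})] be the maximum marginal gain at step i of a greedy construction. Then for any sequence S* of length at most N, Δ_i ≥ (f(S*) − f(Ŝ_{i-1})) / N. -/
theorem sub_le_length_mul_of_submodular {V : Type*} (f : List V → ℝ)
    (hsub : ∀ (S₁ S₂ : List V) (a : V),
      f (S₁ ++ S₂ ++ [a]) - f (S₁ ++ S₂) ≤ f (S₁ ++ [a]) - f S₁)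
    {P : List V} {Δ : ℝ} (hΔ : ∀ a, f (P ++ [a]) - f P ≤ Δ) (L : List V) :
    f (P ++ L) - f P ≤ L.length * Δ := by
  induction L using List.reverseRecOn with
  | nil => simp
  | append_singleton L a ih =>
    have hstep := hsub P L a
    rw [← List.append_assoc, List.length_append, List.length_singleton, Nat.cast_succ]
    linarith [hΔ a]

theorem stmt7_general {V : Type*} [Fintype V] [Nonempty V] (f : List V → ℝ)
    (hmono : ∀ S₁ S₂ : List V, f S₁ ≤ f (S₁ ++ S₂) ∧ f S₂ ≤ f (S₁ ++ S₂))
    (hsub : ∀ (S₁ S₂ : List V) (a : V),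
      f (S₁ ++ S₂ ++ [a]) - f (S₁ ++ S₂) ≤ f (S₁ ++ [a]) - f S₁)
    (N : ℕ) (P : List V) (S' : List V) (hS' : S'.length ≤ N) :
    (f S' - f P) / N ≤
      Finset.univ.sup' Finset.univ_nonempty (fun s : V => f (P ++ [s]) - f P) := by
  set Δ := Finset.univ.sup' Finset.univ_nonempty (fun s : V => f (P ++ [s]) - f P)
  have hgain : ∀ a, f (P ++ [a]) - f P ≤ Δ := fun a =>
    Finset.le_sup' (fun s : V => f (P ++ [s]) - f P) (Finset.mem_univ a)
  have hΔ : 0 ≤ Δ := by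
    obtain ⟨v⟩ := ‹Nonempty V›
    linarith [hgain v, (hmono P [v]).1]
  refine div_le_of_le_mul₀ N.cast_nonneg hΔ ?_
  calc f S' - f P ≤ f (P ++ S') - f P := by linarith [(hmono P S').2]
    _ ≤ S'.length * Δ := sub_le_length_mul_of_submodular f hsub hgain S'
    _ ≤ Δ * N := by rw [mul_comm]; gcongr

/-- per-step lemma — the best single-element marginal gain from any
current sequence `P = Ŝ_{i-1}` is at least `(f(S*) − f(P)) / N` for any benchmark
sequence `S*` of length at most `N`. -/
theorem stmt7 {V : Type*} [Fintype V] [Nonempty V] (f : List V → ℝ)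
    (hnonneg : ∀ S, 0 ≤ f S)
    (hmono : ∀ S₁ S₂ : List V, f S₁ ≤ f (S₁ ++ S₂) ∧ f S₂ ≤ f (S₁ ++ S₂))
    (hsub : ∀ (S₁ S₂ : List V) (a : V),
      f (S₁ ++ S₂ ++ [a]) - f (S₁ ++ S₂) ≤ f (S₁ ++ [a]) - f S₁)
    (hempty : f [] = 0)
    (N : ℕ) (hN : 1 ≤ N) (P : List V) (S' : List V) (hS' : S'.length ≤ N) :
    (f S' - f P) / N ≤
      Finset.univ.sup' Finset.univ_nonempty (fun s : V => f (P ++ [s]) - f P) :=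
  stmt7_general f hmono hsub N P S' hS'
end
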